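/- arXiv:1010.2897 — 2 statements merged into one kernel-verified Lean document; each statement's English description precedes it below -/
import Mathlib

section
/- Let ξ₁, ξ₂ ∈ ℂ with ξ₁ ≠ 0 satisfy 2ξ₁ξ₂ + ξ₁² = 2\bar{ξ₁} + \bar{ξ₂} and ξ₁²ξ₂ = 1. Write ξ₁ = r e^{iφ} with r > 0 and φ ∈ ℝ. Then r = 1. (Equivalently: |ξ₁| = 1.) -/
open Complex ComplexConjugate

theorem stmt_3 (ξ₁ ξ₂ : ℂ) (hξ₁ : ξ₁ ≠ 0)
    (h1 : 2 * ξ₁ * ξ₂ + ξ₁ ^ 2 = 2 * conj ξ₁ + conj ξ₂)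
    (h2 : ξ₁ ^ 2 * ξ₂ = 1)
    (r φ : ℝ) (hr : 0 < r) (hpolar : ξ₁ = (r : ℂ) * Complex.exp (Complex.I * φ)) :
    r = 1 ∧ ‖ξ₁‖ = 1 := by
  have habs : ‖ξ₁‖ = r := by
    rw [hpolar, norm_mul, Complex.norm_exp]
    simp [Complex.norm_of_nonneg hr.le, hr.le]
  have h3 : (conj ξ₁) ^ 2 * conj ξ₂ = 1 := by
    have := congrArg conj h2
    simpa using this
  have key : (ξ₁ * conj ξ₁ - 1) * (2 * (conj ξ₁) ^ 2 - ξ₁ * (1 + ξ₁ * conj ξ₁)) = 0 := by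
    linear_combination (-(ξ₁ * (conj ξ₁) ^ 2)) * h1 + 2 * (conj ξ₁) ^ 2 * h2 + (-ξ₁) * h3
  have hN : ξ₁ * conj ξ₁ = ((r ^ 2 : ℝ) : ℂ) := by
    rw [Complex.mul_conj, Complex.normSq_eq_norm_sq, habs]
  have hr1 : r = 1 := by
    rcases mul_eq_zero.mp key with h | h
    · have : ((r ^ 2 : ℝ) : ℂ) = 1 := by
        rw [← hN]; linear_combination h
      have : (r : ℝ) ^ 2 = 1 := by exact_mod_cast this
      nlinarith
    · have h' : 2 * (conj ξ₁) ^ 2 = ξ₁ * (1 + ξ₁ * conj ξ₁) := by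
        linear_combination h
      have := congrArg (‖·‖) h'
      rw [hN] at this
      simp only [norm_mul, norm_pow, Complex.norm_conj, habs, Complex.norm_two] at this
      have habs2 : ‖(1 + ((r ^ 2 : ℝ) : ℂ))‖ = 1 + r ^ 2 := by
        rw [show (1 + ((r ^ 2 : ℝ) : ℂ)) = (((1 + r ^ 2 : ℝ)) : ℂ) by push_cast; ring,
          Complex.norm_real, Real.norm_eq_abs]
        exact abs_of_nonneg (by positivity)
      rw [habs2] at this
      have h0 : r * (r - 1) ^ 2 = 0 := by linear_combination -this
      have hsq : (r - 1) ^ 2 = 0 := by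
        rcases mul_eq_zero.mp h0 with h' | h'
        · exact absurd h' hr.ne'
        · exact h'
      have := pow_eq_zero_iff (n := 2) (by norm_num) |>.mp hsq
      linarith
  exact ⟨hr1, by rw [habs, hr1]⟩
end

section
/- Let φ ∈ ℝ and s ∈ ℝ, and set u = 6(2e^{-iφ} + e^{2iφ}) + s·e^{iφ/2}. Then ξ = e^{iφ} is a root of the polynomial P(ξ) = ξ³ - (\bar{u}/6)ξ² + (u/6)ξ - 1. Conversely, if e^{iφ} is a root of P for some u ∈ ℂ, then u lies on this line, i.e. u = 6(2e^{-iφ} + e^{2iφ}) + s·e^{iφ/2} for some s ∈ ℝ. -/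
open Complex ComplexConjugate

theorem stmt_10 (φ : ℝ) (u : ℂ) :
    ((Complex.exp (Complex.I * φ)) ^ 3 - (conj u / 6) * (Complex.exp (Complex.I * φ)) ^ 2 +
        (u / 6) * Complex.exp (Complex.I * φ) - 1 = 0) ↔
      ∃ s : ℝ, u = 6 * (2 * Complex.exp (-Complex.I * φ) + Complex.exp (2 * Complex.I * φ)) +
        (s : ℂ) * Complex.exp (Complex.I * φ / 2) := by
  set c : ℂ := Complex.exp (Complex.I * φ / 2) with hc_def
  have hc : c ≠ 0 := Complex.exp_ne_zero _
  have hconjc : conj c = c⁻¹ := by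
    rw [hc_def, ← Complex.exp_conj, ← Complex.exp_neg]
    congr 1
    simp only [map_div₀, map_mul, Complex.conj_I, Complex.conj_ofReal, map_ofNat]
    ring
  have hv : c * conj c = 1 := by
    rw [hconjc, mul_inv_cancel₀ hc]
  have hz : Complex.exp (Complex.I * φ) = c ^ 2 := by
    rw [show Complex.I * (φ : ℂ) = Complex.I * φ / 2 + Complex.I * φ / 2 by ring,
      Complex.exp_add, hc_def]
    ring
  have hz2 : Complex.exp (2 * Complex.I * φ) = c ^ 4 := by
    rw [show (2 : ℂ) * Complex.I * φ = Complex.I * φ + Complex.I * φ by ring,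
      Complex.exp_add, hz]
    ring
  have hzneg : Complex.exp (-Complex.I * φ) = (conj c) ^ 2 := by
    have h1 : Complex.exp (-Complex.I * φ) = conj (Complex.exp (Complex.I * φ)) := by
      rw [← Complex.exp_conj]
      congr 1
      simp only [map_mul, Complex.conj_I, Complex.conj_ofReal]
    rw [h1, hz, map_pow]
  rw [hz, hz2, hzneg]
  constructor
  · intro h
    have key : u * c ^ 2 - conj u * c ^ 4 + 6 * c ^ 6 - 6 = 0 := by
      linear_combination 6 * h
    set S : ℂ := u * conj c - 6 * c ^ 3 - 12 * (conj c) ^ 3 with hS_def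
    have hgoal : u * conj c - conj u * c + 6 * c ^ 3 - 6 * (conj c) ^ 3 = 0 := by
      linear_combination (conj c) ^ 3 * key +
        (-(u * conj c) * (c * conj c + 1) +
          (conj u * c - 6 * c ^ 3) * ((c * conj c) ^ 2 + c * conj c + 1)) * hv
    have hreal : conj S = S := by
      rw [hS_def]
      simp only [map_sub, map_mul, map_pow, Complex.conj_conj, map_ofNat]
      linear_combination -hgoal
    rw [Complex.conj_eq_iff_re] at hreal
    refine ⟨S.re, ?_⟩
    rw [hreal, hS_def]
    linear_combination (12 * (conj c) ^ 2 - u) * hv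
  · rintro ⟨s, rfl⟩
    have hcu : conj (6 * (2 * (conj c) ^ 2 + c ^ 4) + (s : ℂ) * c) =
        6 * (2 * c ^ 2 + (conj c) ^ 4) + (s : ℂ) * conj c := by
      simp only [map_add, map_mul, map_pow, map_ofNat, Complex.conj_conj, Complex.conj_ofReal]
    rw [hcu]
    linear_combination (-(c * conj c - 1) * (c * conj c + 1) ^ 2 - ((s : ℂ) / 6) * c ^ 3) * hv
end
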